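/- Under the standing assumptions (p an odd prime, v ∈ 𝔽_2^p a nonzero small vector with v_0 = 0 that works together with ê, A = {i ∈ ℤ/pℤ : v_i = 1}, A_0 = A ∪ {0}, and k the girth of v): (1) k is even; and (2) 0 ∉ (k−2)A_0 + A, and consequently |(k−2)A_0 + A| ≤ p − 1, where (k−2)A_0 denotes the (k−2)-fold sumset A_0 + ⋯ + A_0 in ℤ/pℤ. -/

import Mathlib

/-- The cyclic shift operator on `𝔽₂ⁿ` (indexed by `ZMod n`): `(cshift x) i = x (i - 1)`. -/
def cshift {n : ℕ} (x : ZMod n → ZMod 2) : ZMod n → ZMod 2 := fun i => x (i - 1)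

/-- The standard dot product over `𝔽₂`. -/
def dot {n : ℕ} [NeZero n] (v x : ZMod n → ZMod 2) : ZMod 2 := ∑ i, v i * x i

/-- A vector `v ∈ 𝔽₂ⁿ` works if for every `x` some cyclic shift of `x` is orthogonal to `v`. -/
def Works {n : ℕ} [NeZero n] (v : ZMod n → ZMod 2) : Prop :=
  ∀ x : ZMod n → ZMod 2, ∃ k : ℕ, dot v (cshift^[k] x) = 0

/-- Two vectors `v, w ∈ 𝔽₂ⁿ` work together if for every `x` there is a single cyclic shift
of `x` orthogonal to both. -/
def WorkTogether2 {n : ℕ} [NeZero n] (v w : ZMod n → ZMod 2) : Prop :=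
  ∀ x : ZMod n → ZMod 2, ∃ k : ℕ,
    dot v (cshift^[k] x) = 0 ∧ dot w (cshift^[k] x) = 0

/-- The vector `ê ∈ 𝔽₂ⁿ` with `ê 0 = 0` and `ê i = 1` for `i ≠ 0`. -/
def ehat (n : ℕ) : ZMod n → ZMod 2 := fun i => if i = 0 then 0 else 1

/-- A vector `v ∈ 𝔽₂ᵖ` is small if there is no `i` with `v i = v (-i) = 1`. -/
def IsSmall {n : ℕ} (v : ZMod n → ZMod 2) : Prop :=
  ¬ ∃ i : ZMod n, v i = 1 ∧ v (-i) = 1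

/-- The set `A = {i : v i = 1}` associated to a vector `v`. -/
def Asupp {n : ℕ} [NeZero n] (v : ZMod n → ZMod 2) : Finset (ZMod n) :=
  Finset.univ.filter fun i => v i = 1

/-- The girth of `v`: the least `m ≥ 1` such that `0` is a sum of `m` elements of
`A = {i : v i = 1}`; equivalently, the length of the shortest directed cycle in the Cayley
digraph `G_v` on `ℤ/nℤ` with an arc from `i` to `i + j` whenever `v j = 1`. -/
noncomputable def girth {n : ℕ} [NeZero n] (v : ZMod n → ZMod 2) : ℕ :=
  sInf {m : ℕ | 0 < m ∧ ∃ f : Fin m → ZMod n, (∀ t, f t ∈ Asupp v) ∧ ∑ t, f t = 0}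

open Pointwise in
/-- The `m`-fold iterated sumset `A + ⋯ + A` in `ℤ/nℤ` (with `0`-fold sumset `{0}`). -/
def iterSumset {n : ℕ} (A : Finset (ZMod n)) : ℕ → Finset (ZMod n)
  | 0 => {0}
  | m + 1 => iterSumset A m + A

/-! Let `k` be the girth and `s₀, …, s_{k-1}` the partial sums of a shortest zero-sum cycle of
steps from `A`; by minimality they are distinct. The cycle has no chords: if `s_t + a = s_u`
with `a ∈ A`, then `a` followed by the steps from `s_u` round to `s_t` is a zero-sum of length
`(t - u mod k) + 1 ≥ k`, which forces `s_u = s_{t+1}`. So every vertex `c ∈ C = {s_t}` has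
exactly one `a ∈ A` with `c + a ∈ C`. Now let `x` be the indicator of `C`. If `k` were odd,
`ê · σᵐx = |C| - x(-m) = 0` forces `-m ∈ C`, and then `v · σᵐx = #{a ∈ A : -m + a ∈ C} = 1`;
so no shift of `x` is orthogonal to both `v` and `ê`. The sumset statement is minimality again:
an element of `(k-2)A₀ + A` is a sum of between `1` and `k - 1` elements of `A`. -/

open Finset

section SumsOfElements

variable {G : Type*} [AddCommGroup G]

def IsSumOfLength (A : Finset G) (m : ℕ) (y : G) : Prop :=
  ∃ g : Fin m → G, (∀ t, g t ∈ A) ∧ ∑ t, g t = y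

variable {A : Finset G}

theorem isSumOfLength_zero : IsSumOfLength A 0 0 :=
  ⟨Fin.elim0, fun t => t.elim0, by simp⟩

theorem IsSumOfLength.cons {m : ℕ} {a y : G} (ha : a ∈ A) (h : IsSumOfLength A m y) :
    IsSumOfLength A (m + 1) (a + y) := by
  obtain ⟨g, hg, rfl⟩ := h
  exact ⟨Fin.cons a g, Fin.cases ha hg, Fin.sum_cons a g⟩

theorem isSumOfLength_sum_Ico {f : ℕ → G} (hf : ∀ i, f i ∈ A) (u w : ℕ) :
    IsSumOfLength A (w - u) (∑ i ∈ Ico u w, f i) :=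
  ⟨fun j => f (u + j), fun _ => hf _, by
    rw [Fin.sum_univ_eq_sum_range (fun j => f (u + j)), sum_Ico_eq_sum_range]⟩

end SumsOfElements

section MinimalCycle

variable {G : Type*} [AddCommGroup G] {A : Finset G} {k : ℕ} {f : ℕ → G}

structure IsMinimalZeroSumCycle (A : Finset G) (k : ℕ) (f : ℕ → G) : Prop where
  mem : ∀ i, f i ∈ A
  periodic : Function.Periodic f k
  sum_range : ∑ i ∈ range k, f i = 0
  le_of_isSumOfLength : ∀ m, 0 < m → IsSumOfLength A m 0 → k ≤ m

theorem exists_isMinimalZeroSumCycle (hk : 0 < k) (h : IsSumOfLength A k 0)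
    (hmin : ∀ m, 0 < m → IsSumOfLength A m 0 → k ≤ m) :
    ∃ f, IsMinimalZeroSumCycle A k f := by
  obtain ⟨g, hg, hsum⟩ := h
  refine ⟨fun i => g ⟨i % k, Nat.mod_lt i hk⟩, fun i => hg _, fun i => by simp, ?_, hmin⟩
  rw [sum_range, ← hsum]
  exact sum_congr rfl fun t _ => by simp [Nat.mod_eq_of_lt t.isLt]

def cycleVertices [DecidableEq G] (f : ℕ → G) (k : ℕ) : Finset G :=
  (range k).image fun t => ∑ i ∈ range t, f i

namespace IsMinimalZeroSumCycle

theorem periodic_partialSum (hf : IsMinimalZeroSumCycle A k f) :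
    Function.Periodic (fun t => ∑ i ∈ range t, f i) k := by
  intro t
  dsimp only
  rw [add_comm, sum_range_add, hf.sum_range, zero_add]
  exact sum_congr rfl fun i _ => by rw [add_comm, hf.periodic i]

theorem partialSum_ne (hf : IsMinimalZeroSumCycle A k f) {t u : ℕ} (htu : t < u) (hu : u < k) :
    ∑ i ∈ range t, f i ≠ ∑ i ∈ range u, f i := by
  intro h
  have hzero : IsSumOfLength A (u - t) 0 := by
    simpa [sum_Ico_eq_sub _ htu.le, h] using isSumOfLength_sum_Ico hf.mem t u
  have := hf.le_of_isSumOfLength _ (by omega) hzero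
  omega

theorem card_cycleVertices [DecidableEq G] (hf : IsMinimalZeroSumCycle A k f) :
    (cycleVertices f k).card = k := by
  rw [cycleVertices, card_image_of_injOn, card_range]
  intro t ht u hu h
  simp only [coe_range, Set.mem_Iio] at ht hu
  by_contra hne
  rcases Nat.lt_or_gt_of_ne hne with htu | hut
  · exact hf.partialSum_ne htu hu h
  · exact hf.partialSum_ne hut ht h.symm

theorem eq_of_partialSum_add_eq (hf : IsMinimalZeroSumCycle A k f) {t u : ℕ} (ht : t < k)
    (hu : u < k) {a : G} (ha : a ∈ A) (h : ∑ i ∈ range t, f i + a = ∑ i ∈ range u, f i) :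
    a = f t := by
  obtain ⟨u', htu', hu'k, hsu'⟩ : ∃ u', t < u' ∧ u' ≤ t + k ∧
      ∑ i ∈ range u', f i = ∑ i ∈ range u, f i := by
    rcases lt_or_ge t u with htu | hut
    · exact ⟨u, htu, by omega, rfl⟩
    · exact ⟨u + k, by omega, by omega, hf.periodic_partialSum u⟩
  have hcycle : IsSumOfLength A (t + k - u' + 1) 0 := by
    have hround : ∑ i ∈ range (t + k), f i = ∑ i ∈ range t, f i := hf.periodic_partialSum t
    have := (isSumOfLength_sum_Ico hf.mem u' (t + k)).cons ha
    rwa [sum_Ico_eq_sub _ hu'k, hround, hsu', ← h,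
      sub_add_cancel_left, add_neg_cancel] at this
  have := hf.le_of_isSumOfLength _ (Nat.succ_pos _) hcycle
  obtain rfl : u' = t + 1 := by omega
  rw [sum_range_succ] at hsu'
  exact add_left_cancel (h.trans hsu'.symm)

theorem card_filter_add_mem_cycleVertices [DecidableEq G] (hf : IsMinimalZeroSumCycle A k f)
    {c : G} (hc : c ∈ cycleVertices f k) :
    (A.filter fun a => c + a ∈ cycleVertices f k).card = 1 := by
  obtain ⟨t, ht, rfl⟩ := mem_image.1 hc
  rw [mem_range] at ht
  rw [card_eq_one]
  refine ⟨f t, ?_⟩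
  ext a
  simp only [cycleVertices, mem_filter, mem_singleton, mem_image, mem_range]
  constructor
  · rintro ⟨ha, u, hu, hsu⟩
    exact hf.eq_of_partialSum_add_eq ht hu ha hsu.symm
  · rintro rfl
    refine ⟨hf.mem t, (t + 1) % k, Nat.mod_lt _ (by omega), ?_⟩
    rw [hf.periodic_partialSum.map_mod_nat, sum_range_succ]

end IsMinimalZeroSumCycle

end MinimalCycle

section ShiftsAndGirth

theorem cshift_iterate_apply {n : ℕ} (x : ZMod n → ZMod 2) (m : ℕ) (i : ZMod n) :
    (cshift^[m] x) i = x (i - m) := by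
  induction m generalizing i with
  | zero => simp
  | succ m ih =>
    rw [Function.iterate_succ_apply', cshift, ih, Nat.cast_succ, sub_sub, add_comm]

theorem exists_le_isSumOfLength_of_mem_iterSumset {n : ℕ} {A : Finset (ZMod n)} {m : ℕ}
    {y : ZMod n} (hy : y ∈ iterSumset (insert 0 A) m) : ∃ j ≤ m, IsSumOfLength A j y := by
  induction m generalizing y with
  | zero =>
    rw [iterSumset, mem_singleton] at hy
    exact ⟨0, le_rfl, hy ▸ isSumOfLength_zero⟩
  | succ m ih =>
    obtain ⟨b, hb, c, hc, rfl⟩ := mem_add.1 hy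
    obtain ⟨j, hjm, hj⟩ := ih hb
    rcases mem_insert.1 hc with rfl | hcA
    · exact ⟨j, by omega, by rwa [add_zero]⟩
    · exact ⟨j + 1, by omega, add_comm c b ▸ hj.cons hcA⟩

variable {n : ℕ} [NeZero n]

theorem mem_asupp {v : ZMod n → ZMod 2} {i : ZMod n} : i ∈ Asupp v ↔ v i = 1 := by
  simp [Asupp]

theorem dot_eq_sum_asupp (v z : ZMod n → ZMod 2) : dot v z = ∑ i ∈ Asupp v, z i := by
  have hmul : ∀ b c : ZMod 2, b * c = if b = 1 then c else 0 := by decide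
  simp only [dot, Asupp, sum_filter, hmul]

theorem dot_ehat (z : ZMod n → ZMod 2) : dot (ehat n) z = ∑ i, z i - z 0 := by
  rw [dot, eq_sub_iff_add_eq, ← sum_erase_add _ _ (mem_univ 0),
    ← sum_erase_add _ _ (mem_univ 0)]
  simp only [ehat, if_pos, zero_mul, add_zero]
  exact congrArg (· + z 0) <|
    sum_congr rfl fun i hi => by rw [if_neg (ne_of_mem_erase hi), one_mul]

theorem not_workTogether2_ehat_of_odd {v : ZMod n → ZMod 2} (C : Finset (ZMod n))
    (hC : Odd C.card) (hA : ∀ c ∈ C, Odd ((Asupp v).filter fun a => c + a ∈ C).card) :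
    ¬ WorkTogether2 v (ehat n) := by
  intro hwork
  obtain ⟨m, hvx, hex⟩ := hwork fun i => if i ∈ C then 1 else 0
  have hsum : ∑ i : ZMod n, (if i - m ∈ C then (1 : ZMod 2) else 0) = 1 := by
    rw [Fintype.sum_equiv (Equiv.subRight (m : ZMod n)) (fun i => if i - m ∈ C then 1 else 0)
      (fun i => if i ∈ C then 1 else 0) fun _ => rfl, sum_boole, filter_mem_eq_inter,
      univ_inter, ZMod.natCast_eq_one_iff_odd]
    exact hC
  rw [dot_ehat] at hex
  simp only [cshift_iterate_apply, hsum, zero_sub] at hex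
  have hmC : -(m : ZMod n) ∈ C := by
    by_contra hnot
    simp [hnot] at hex
  rw [dot_eq_sum_asupp] at hvx
  simp only [cshift_iterate_apply, sum_boole, sub_eq_neg_add,
    ZMod.natCast_eq_zero_iff_even] at hvx
  exact Nat.not_even_iff_odd.2 (hA _ hmC) hvx

theorem girth_le {v : ZMod n → ZMod 2} {m : ℕ} (hm : 0 < m)
    (h : IsSumOfLength (Asupp v) m 0) : girth v ≤ m :=
  Nat.sInf_le ⟨hm, h⟩

theorem girth_pos_and_isSumOfLength {v : ZMod n → ZMod 2} (hv : v ≠ 0) :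
    0 < girth v ∧ IsSumOfLength (Asupp v) (girth v) 0 := by
  obtain ⟨a, ha⟩ := Function.ne_iff.1 hv
  have hone : ∀ b : ZMod 2, b ≠ 0 → b = 1 := by decide
  refine Nat.sInf_mem (s := {m | 0 < m ∧ IsSumOfLength (Asupp v) m 0})
    ⟨n, NeZero.pos n, fun _ => a, fun _ => mem_asupp.2 (hone _ ha), ?_⟩
  simp

theorem girth_even {v : ZMod n → ZMod 2} (hv : v ≠ 0) (hwork : WorkTogether2 v (ehat n)) :
    Even (girth v) := by
  obtain ⟨hk, hsum⟩ := girth_pos_and_isSumOfLength hv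
  obtain ⟨f, hf⟩ := exists_isMinimalZeroSumCycle hk hsum fun _ => girth_le
  by_contra hodd
  rw [Nat.not_even_iff_odd] at hodd
  refine not_workTogether2_ehat_of_odd (cycleVertices f (girth v)) ?_ (fun c hc => ?_) hwork
  · rwa [hf.card_cycleVertices]
  · rw [hf.card_filter_add_mem_cycleVertices hc]
    exact odd_one

open Pointwise in
theorem zero_notMem_iterSumset_add_of_lt_girth {v : ZMod n → ZMod 2} {m : ℕ}
    (hm : m + 1 < girth v) : (0 : ZMod n) ∉ iterSumset (insert 0 (Asupp v)) m + Asupp v := by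
  intro h0
  obtain ⟨b, hb, c, hc, hbc⟩ := mem_add.1 h0
  obtain ⟨j, hjm, hj⟩ := exists_le_isSumOfLength_of_mem_iterSumset hb
  have := girth_le (Nat.succ_pos j) (by rw [← hbc, add_comm]; exact hj.cons hc)
  omega

end ShiftsAndGirth

open Pointwise in
theorem girth_even_and_sumset_bound_general (p : ℕ) [NeZero p]
    (v : ZMod p → ZMod 2) (hv : v ≠ 0)
    (hwork : WorkTogether2 v (ehat p)) :
    Even (girth v) ∧
    (0 : ZMod p) ∉ iterSumset (insert 0 (Asupp v)) (girth v - 2) + Asupp v ∧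
    (iterSumset (insert 0 (Asupp v)) (girth v - 2) + Asupp v).card ≤ p - 1 := by
  have heven := girth_even hv hwork
  have hpos := (girth_pos_and_isSumOfLength hv).1
  have hzero : (0 : ZMod p) ∉ iterSumset (insert 0 (Asupp v)) (girth v - 2) + Asupp v := by
    obtain ⟨r, hr⟩ := heven
    exact zero_notMem_iterSumset_add_of_lt_girth (by omega)
  refine ⟨heven, hzero, ?_⟩
  have := card_lt_univ_of_notMem hzero
  rw [ZMod.card] at this
  omega

open Pointwise in
/-- Standing assumptions: `p` an odd prime, `v ∈ 𝔽₂ᵖ` a nonzero small vector with `v 0 = 0`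
working together with `ê`, `A = {i : v i = 1}`, `A₀ = A ∪ {0}` and `k` the girth of `v`.
Then (1) `k` is even, and (2) `0 ∉ (k−2)A₀ + A`, and consequently
`|(k−2)A₀ + A| ≤ p − 1`. -/
theorem girth_even_and_sumset_bound (p : ℕ) [NeZero p] (hp : p.Prime) (hodd : Odd p)
    (v : ZMod p → ZMod 2) (hv : v ≠ 0) (hsmall : IsSmall v) (h0 : v 0 = 0)
    (hwork : WorkTogether2 v (ehat p)) :
    Even (girth v) ∧
    (0 : ZMod p) ∉ iterSumset (insert 0 (Asupp v)) (girth v - 2) + Asupp v ∧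
    (iterSumset (insert 0 (Asupp v)) (girth v - 2) + Asupp v).card ≤ p - 1 :=
  girth_even_and_sumset_bound_general p v hv hwork
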